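/- Fix t > 0, ε > 0, β, ρ ∈ ℝ, let δ = -|β| - |ρ|/t + √((|β| + |ρ|/t)² + 2ε/t), let γ₀ ≥ 0, let ν be a Borel measure on ℝ concentrated on (0,∞) with ∫ min(x,1) ν(dx) < ∞ and ∫_{x>1} e^{rx} ν(dx) < ∞ for all r < ε, and let π be a Borel probability measure on ℝ concentrated on (-∞,0). Let Θ(u) = ∫_{(-∞,0)} ∫₀ᵗ θ_L(u·f_u(A,s)) ds π(dA). Then for every real constant c, every real z > 0 and every v ∈ ℝ with |v| < δ, the function w ↦ exp((v + iw)c + ((v + iw)β + (v + iw)²/2)·z + Θ(v + iw)) is Lebesgue integrable on ℝ (i.e., the map w ↦ Φ(v + iw) with Φ(u) = exp(uc + (uβ + u²/2)z + Θ(u)) is absolutely integrable over w ∈ ℝ). -/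

import Mathlib

open MeasureTheory

/-- `u·f_u(A,s) = ((e^{A(t-s)} - 1)/A)(uβ + u²/2) + ρu` for complex `u`. -/
noncomputable def ufc (t β ρ : ℝ) (u : ℂ) (A s : ℝ) : ℂ :=
  (((Real.exp (A * (t - s)) - 1) / A : ℝ) : ℂ) * (u * (β : ℂ) + u ^ 2 / 2) + (ρ : ℂ) * u

/-- `θ_L(z) = γ₀ z + ∫_{(0,∞)} (e^{zx} - 1) ν(dx)`. -/
noncomputable def thetaL (γ₀ : ℝ) (ν : Measure ℝ) (z : ℂ) : ℂ :=
  (γ₀ : ℂ) * z + ∫ x in Set.Ioi (0 : ℝ), (Complex.exp (z * (x : ℂ)) - 1) ∂ν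

/-- `Θ(u) = ∫_{(-∞,0)} ∫₀ᵗ θ_L(u·f_u(A,s)) ds π(dA)`. -/
noncomputable def Theta (t β ρ γ₀ : ℝ) (ν π : Measure ℝ) (u : ℂ) : ℂ :=
  ∫ A in Set.Iio (0 : ℝ), (∫ s in (0 : ℝ)..t, thetaL γ₀ ν (ufc t β ρ u A s)) ∂π

/-!
For `u = v + iw` with `A < 0` and `s ∈ [0, t]` we have `0 ≤ (e^{A(t-s)} - 1)/A ≤ t`, and the
`-w²/2` in `u²/2` only lowers the real part, so `Re (u·f_u(A,s)) ≤ M := t(|β||v| + v²/2) + |ρ||v|`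
uniformly in `w`; the choice of `δ` is exactly `M < ε`. Hence `Re θ_L(u·f_u(A,s))` is bounded by
`γ₀M + ∫ (e^{Mx} - 1) ν(dx) < ∞`, so `Re Θ(v + iw)` is bounded in `w` and the integrand is
dominated by a multiple of the Gaussian `e^{-zw²/2}`.
-/

open Set
open Real (exp exp_pos exp_add exp_zero exp_le_exp exp_le_one_iff one_le_exp add_one_le_exp
  lt_sqrt)

lemma sigmaFinite_restrict_Ioi_of_integrable_min {ν : Measure ℝ}
    (hmin : Integrable (fun x : ℝ => min x 1) ν) : SigmaFinite (ν.restrict (Ioi 0)) := by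
  refine ⟨⟨⟨fun n : ℕ => Ioi (1 / ((n : ℝ) + 1)) ∪ Iic 0, fun _ => trivial, fun n => ?_, ?_⟩⟩⟩
  · have hpos : (0 : ℝ) < min (1 / ((n : ℝ) + 1)) 1 := lt_min (by positivity) one_pos
    have hIic : ν.restrict (Ioi 0) (Iic 0) = 0 := by
      rw [Measure.restrict_apply measurableSet_Iic, (Iic_disjoint_Ioi le_rfl).inter_eq,
        measure_empty]
    calc ν.restrict (Ioi 0) (Ioi (1 / ((n : ℝ) + 1)) ∪ Iic 0)
        ≤ ν (Ioi (1 / ((n : ℝ) + 1))) + 0 := by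
          refine (measure_union_le _ _).trans ?_
          rw [hIic]
          gcongr
          exact Measure.restrict_le_self
      _ ≤ ν {x | min (1 / ((n : ℝ) + 1)) 1 ≤ min x 1} := by
          rw [add_zero]
          exact measure_mono fun x (hx : _ < x) => show min _ 1 ≤ min x 1 from
            min_le_min_right 1 hx.le
      _ < ⊤ := hmin.measure_ge_lt_top hpos
  · refine eq_univ_of_forall fun x => mem_iUnion.2 ?_
    rcases le_or_gt x 0 with hx | hx
    · exact ⟨0, Or.inr hx⟩
    · obtain ⟨n, hn⟩ := exists_nat_one_div_lt hx
      exact ⟨n, Or.inl hn⟩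

/-- `0 ≤ C` covers the junk value `0` of the integral of a non-integrable function. -/
lemma re_setIntegral_le {α : Type*} [MeasurableSpace α] {μ : Measure α} {s : Set α}
    (hs : MeasurableSet s) (hμs : μ s ≠ ⊤) {f : α → ℂ} {C : ℝ} (hC : 0 ≤ C)
    (hf : ∀ x ∈ s, (f x).re ≤ C) : (∫ x in s, f x ∂μ).re ≤ μ.real s * C := by
  by_cases hint : IntegrableOn f s μ
  · calc (∫ x in s, f x ∂μ).re = ∫ x in s, (f x).re ∂μ := (integral_re hint).symm
      _ ≤ ∫ _ in s, C ∂μ := setIntegral_mono_on hint.re (integrableOn_const hμs) hs hf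
      _ = μ.real s * C := by rw [setIntegral_const, smul_eq_mul]
  · rw [integral_undef hint, Complex.zero_re]
    positivity

lemma exp_sub_one_le_mul_exp (x : ℝ) : exp x - 1 ≤ x * exp x := by
  have h := add_one_le_exp (-x)
  have hinv : exp (-x) * exp x = 1 := by rw [← exp_add, neg_add_cancel, exp_zero]
  nlinarith [exp_pos x]

lemma integrableOn_exp_mul_sub_one_Ioi {ν : Measure ℝ} {M : ℝ} (hM0 : 0 ≤ M)
    (hmin : Integrable (fun x : ℝ => min x 1) ν)
    (hM : IntegrableOn (fun x => exp (M * x)) (Ioi 1) ν) :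
    IntegrableOn (fun x => exp (M * x) - 1) (Ioi 0) ν := by
  have hfin : ν (Ioi 1) ≠ ⊤ := by
    refine (measure_mono fun x (hx : 1 < x) => ?_).trans_lt (hmin.measure_ge_lt_top one_pos) |>.ne
    simpa using hx.le
  rw [← Ioc_union_Ioi_eq_Ioi zero_le_one]
  refine IntegrableOn.union ?_ (hM.sub (integrableOn_const hfin))
  refine Integrable.mono' (hmin.const_mul (M * exp M)).integrableOn (by fun_prop) ?_
  refine (ae_restrict_iff' measurableSet_Ioc).2 (ae_of_all _ fun x ⟨hx0, hx1⟩ => ?_)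
  have hMx : 0 ≤ M * x := mul_nonneg hM0 hx0.le
  rw [Real.norm_of_nonneg (sub_nonneg.2 (one_le_exp hMx)), min_eq_left hx1]
  calc exp (M * x) - 1 ≤ M * x * exp (M * x) := exp_sub_one_le_mul_exp _
    _ ≤ M * x * exp M := by gcongr; nlinarith
    _ = M * exp M * x := by ring

lemma re_cexp_mul_ofReal_sub_one_le {ζ : ℂ} {M x : ℝ} (hζ : ζ.re ≤ M) (hx : 0 ≤ x) :
    (Complex.exp (ζ * x) - 1).re ≤ exp (M * x) - 1 := by
  rw [Complex.sub_re, Complex.one_re]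
  gcongr
  calc (Complex.exp (ζ * x)).re ≤ ‖Complex.exp (ζ * x)‖ := Complex.re_le_norm _
    _ = exp (ζ.re * x) := by rw [Complex.norm_exp, Complex.re_mul_ofReal]
    _ ≤ exp (M * x) := by gcongr

lemma setIntegral_exp_mul_sub_one_nonneg {ν : Measure ℝ} {M : ℝ} (hM0 : 0 ≤ M) :
    0 ≤ ∫ x in Ioi 0, (exp (M * x) - 1) ∂ν :=
  setIntegral_nonneg measurableSet_Ioi fun _ hx =>
    sub_nonneg.2 (one_le_exp (mul_nonneg hM0 (le_of_lt hx)))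

lemma re_thetaL_le {γ₀ M : ℝ} (hγ₀ : 0 ≤ γ₀) {ν : Measure ℝ} (hM0 : 0 ≤ M)
    (hint : IntegrableOn (fun x => exp (M * x) - 1) (Ioi 0) ν) {ζ : ℂ} (hζ : ζ.re ≤ M) :
    (thetaL γ₀ ν ζ).re ≤ γ₀ * M + ∫ x in Ioi 0, (exp (M * x) - 1) ∂ν := by
  rw [thetaL, Complex.add_re, Complex.re_ofReal_mul]
  gcongr
  by_cases h : IntegrableOn (fun x : ℝ => Complex.exp (ζ * x) - 1) (Ioi 0) ν
  · rw [← RCLike.re_to_complex, ← integral_re h]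
    exact setIntegral_mono_on h.re hint measurableSet_Ioi fun x hx =>
      re_cexp_mul_ofReal_sub_one_le hζ (le_of_lt hx)
  · rw [integral_undef h, Complex.zero_re]
    exact setIntegral_exp_mul_sub_one_nonneg hM0

lemma exp_mul_sub_one_div_mem_Icc {A τ : ℝ} (hA : A < 0) (hτ : 0 ≤ τ) :
    (exp (A * τ) - 1) / A ∈ Icc 0 τ := by
  have hAτ : A * τ ≤ 0 := mul_nonpos_of_nonpos_of_nonneg hA.le hτ
  constructor
  · exact div_nonneg_of_nonpos (sub_nonpos.2 (exp_le_one_iff.2 hAτ)) hA.le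
  · rw [div_le_iff_of_neg hA]
    linarith [add_one_le_exp (A * τ)]

lemma re_mul_add_sq_div_two (u : ℂ) (β : ℝ) :
    (u * β + u ^ 2 / 2).re = u.re * β + (u.re ^ 2 - u.im ^ 2) / 2 := by
  simp only [Complex.add_re, Complex.div_ofNat_re, sq, Complex.mul_re, Complex.ofReal_re,
    Complex.ofReal_im, mul_zero, sub_zero]

lemma re_ufc_le {t β ρ A s : ℝ} {u : ℂ} (hA : A < 0) (hs : s ∈ Icc 0 t) :
    (ufc t β ρ u A s).re ≤ t * (|β| * |u.re| + u.re ^ 2 / 2) + |ρ| * |u.re| := by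
  obtain ⟨hg0, hgt⟩ := exp_mul_sub_one_div_mem_Icc hA (sub_nonneg.2 hs.2)
  set g := (exp (A * (t - s)) - 1) / A
  have hq : u.re * β + (u.re ^ 2 - u.im ^ 2) / 2 ≤ |β| * |u.re| + u.re ^ 2 / 2 := by
    have : u.re * β ≤ |β| * |u.re| := by
      rw [mul_comm |β|, ← abs_mul]; exact le_abs_self _
    nlinarith [sq_nonneg u.im]
  have hg : g * (u.re * β + (u.re ^ 2 - u.im ^ 2) / 2) ≤ t * (|β| * |u.re| + u.re ^ 2 / 2) := by
    calc g * _ ≤ g * (|β| * |u.re| + u.re ^ 2 / 2) := by gcongr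
      _ ≤ t * (|β| * |u.re| + u.re ^ 2 / 2) := by gcongr; linarith [hs.1]
  have hρ : ρ * u.re ≤ |ρ| * |u.re| := (le_abs_self _).trans (abs_mul _ _).le
  rw [ufc, Complex.add_re, Complex.re_ofReal_mul, re_mul_add_sq_div_two, Complex.re_ofReal_mul]
  linarith

lemma re_Theta_le {t β ρ γ₀ C : ℝ} (ht : 0 ≤ t) (hC : 0 ≤ C) {ν π : Measure ℝ}
    [IsFiniteMeasure π] {u : ℂ}
    (hθ : ∀ A < (0 : ℝ), ∀ s ∈ Icc 0 t, (thetaL γ₀ ν (ufc t β ρ u A s)).re ≤ C) :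
    (Theta t β ρ γ₀ ν π u).re ≤ π.real (Iio 0) * (t * C) := by
  refine re_setIntegral_le measurableSet_Iio (measure_ne_top _ _) (by positivity) fun A hA => ?_
  rw [intervalIntegral.integral_of_le ht]
  have h := re_setIntegral_le (μ := volume) measurableSet_Ioc measure_Ioc_lt_top.ne hC
    fun s hs => hθ A hA s (Ioc_subset_Icc_self hs)
  rwa [Real.volume_real_Ioc_of_le ht, sub_zero] at h

lemma stronglyMeasurable_thetaL (γ₀ : ℝ) (ν : Measure ℝ) [SigmaFinite (ν.restrict (Ioi 0))] :
    StronglyMeasurable (thetaL γ₀ ν) := by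
  have hcont : Continuous fun p : ℂ × ℝ => Complex.exp (p.1 * p.2) - 1 := by fun_prop
  exact (continuous_const.mul continuous_id).stronglyMeasurable.add
    hcont.stronglyMeasurable.integral_prod_right'

lemma stronglyMeasurable_Theta {t : ℝ} (ht : 0 ≤ t) (β ρ γ₀ : ℝ) (ν π : Measure ℝ)
    [SigmaFinite (ν.restrict (Ioi 0))] [SFinite π] :
    StronglyMeasurable (Theta t β ρ γ₀ ν π) := by
  have hufc : Measurable fun p : (ℂ × ℝ) × ℝ => ufc t β ρ p.1.1 p.1.2 p.2 := by
    unfold ufc; fun_prop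
  have hinner := ((stronglyMeasurable_thetaL γ₀ ν).comp_measurable hufc).integral_prod_right'
    (ν := volume.restrict (Ioc 0 t))
  simp_rw [← intervalIntegral.integral_of_le ht] at hinner
  exact hinner.integral_prod_right'

lemma integrable_cexp_of_re_le {φ : ℝ → ℂ} (hφ : AEStronglyMeasurable φ) {K b : ℝ}
    (hb : 0 < b) (hle : ∀ w, (φ w).re ≤ K - b * w ^ 2) : Integrable fun w => Complex.exp (φ w) := by
  refine ((integrable_exp_neg_mul_sq hb).const_mul (exp K)).mono'
    (Complex.continuous_exp.comp_aestronglyMeasurable hφ) (ae_of_all _ fun w => ?_)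
  rw [Complex.norm_exp, ← exp_add]
  exact exp_le_exp.2 (by linarith [hle w])

lemma lt_of_abs_lt_neg_add_sqrt {t ε β ρ v : ℝ} (ht : 0 < t)
    (hv : |v| < -|β| - |ρ| / t + √((|β| + |ρ| / t) ^ 2 + 2 * ε / t)) :
    t * (|β| * |v| + v ^ 2 / 2) + |ρ| * |v| < ε := by
  set a := |β| + |ρ| / t with ha
  have hsq : (|v| + a) ^ 2 < a ^ 2 + 2 * ε / t :=
    (lt_sqrt (by positivity)).1 (by linarith)
  calc t * (|β| * |v| + v ^ 2 / 2) + |ρ| * |v| = t / 2 * ((|v| + a) ^ 2 - a ^ 2) := by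
        rw [ha, ← sq_abs v]; field_simp; ring
    _ < t / 2 * (2 * ε / t) := by gcongr; linarith
    _ = ε := by field_simp

theorem stmt_12_general (t ε β ρ γ₀ : ℝ) (ht : 0 < t) (hγ₀ : 0 ≤ γ₀)
    (ν : Measure ℝ)
    (hmin : Integrable (fun x : ℝ => min x 1) ν)
    (hexp : ∀ r : ℝ, r < ε → IntegrableOn (fun x : ℝ => Real.exp (r * x)) {x | 1 < x} ν)
    (π : Measure ℝ) [IsProbabilityMeasure π] :
    ∀ (c : ℝ) (z : ℝ), 0 < z →
      ∀ v : ℝ, |v| < -|β| - |ρ| / t + Real.sqrt ((|β| + |ρ| / t) ^ 2 + 2 * ε / t) →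
        Integrable
          (fun w : ℝ =>
            Complex.exp (((v : ℂ) + (w : ℂ) * Complex.I) * (c : ℂ) +
              (((v : ℂ) + (w : ℂ) * Complex.I) * (β : ℂ) +
                  ((v : ℂ) + (w : ℂ) * Complex.I) ^ 2 / 2) * (z : ℂ) +
              Theta t β ρ γ₀ ν π ((v : ℂ) + (w : ℂ) * Complex.I)))
          volume := by
  intro c z hz v hv
  have := sigmaFinite_restrict_Ioi_of_integrable_min hmin
  set M := t * (|β| * |v| + v ^ 2 / 2) + |ρ| * |v|
  have hM0 : 0 ≤ M := by positivity
  have hint :=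
    integrableOn_exp_mul_sub_one_Ioi hM0 hmin (hexp M (lt_of_abs_lt_neg_add_sqrt ht hv))
  set C := γ₀ * M + ∫ x in Ioi 0, (exp (M * x) - 1) ∂ν
  have hC0 : 0 ≤ C := add_nonneg (by positivity) (setIntegral_exp_mul_sub_one_nonneg hM0)
  have hΘ (w : ℝ) : (Theta t β ρ γ₀ ν π (v + w * Complex.I)).re ≤ π.real (Iio 0) * (t * C) :=
    re_Theta_le ht.le hC0 fun A hA s hs => re_thetaL_le hγ₀ hM0 hint <| by
      simpa using re_ufc_le (β := β) (ρ := ρ) (u := v + w * Complex.I) hA hs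
  refine integrable_cexp_of_re_le
    (K := v * c + (v * β + v ^ 2 / 2) * z + π.real (Iio 0) * (t * C)) (b := z / 2) ?_
    (half_pos hz) fun w => ?_
  · exact (Continuous.aestronglyMeasurable (by fun_prop)).add
      ((stronglyMeasurable_Theta ht.le β ρ γ₀ ν π).measurable.comp
        (by fun_prop)).aestronglyMeasurable
  · have hre : (v + w * Complex.I).re = v := by simp
    have him : (v + w * Complex.I).im = w := by simp
    rw [Complex.add_re, Complex.add_re, Complex.re_mul_ofReal, Complex.re_mul_ofReal,
      re_mul_add_sq_div_two, hre, him]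
    linarith [hΘ w]

theorem stmt_12 (t ε β ρ γ₀ : ℝ) (ht : 0 < t) (hε : 0 < ε) (hγ₀ : 0 ≤ γ₀)
    (ν : Measure ℝ) (hν : ν (Set.Ioi (0 : ℝ))ᶜ = 0)
    (hmin : Integrable (fun x : ℝ => min x 1) ν)
    (hexp : ∀ r : ℝ, r < ε → IntegrableOn (fun x : ℝ => Real.exp (r * x)) {x | 1 < x} ν)
    (π : Measure ℝ) [IsProbabilityMeasure π] (hπ : π (Set.Iio (0 : ℝ))ᶜ = 0) :
    ∀ (c : ℝ) (z : ℝ), 0 < z →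
      ∀ v : ℝ, |v| < -|β| - |ρ| / t + Real.sqrt ((|β| + |ρ| / t) ^ 2 + 2 * ε / t) →
        Integrable
          (fun w : ℝ =>
            Complex.exp (((v : ℂ) + (w : ℂ) * Complex.I) * (c : ℂ) +
              (((v : ℂ) + (w : ℂ) * Complex.I) * (β : ℂ) +
                  ((v : ℂ) + (w : ℂ) * Complex.I) ^ 2 / 2) * (z : ℂ) +
              Theta t β ρ γ₀ ν π ((v : ℂ) + (w : ℂ) * Complex.I)))
          volume :=
  stmt_12_general t ε β ρ γ₀ ht hγ₀ ν hmin hexp π
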